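/- arXiv:2110.05049 — 3 statements merged into one kernel-verified Lean document; each statement's English description precedes it below -/
import Mathlib

section
/- Let (S,d) be a separable metric space, let (Ω,𝔉,ℙ) be a probability space, let (μ_n)_{n≥1} be a sequence of random Borel probability measures on S (i.e. measurable maps from Ω to the space of Borel probability measures on S equipped with the Borel σ-algebra of the topology of weak convergence), and let μ be a deterministic Borel probability measure on S. Then the following are equivalent: (1) the distance from μ_n to μ, in a metric metrising weak convergence of probability measures on S (concretely, the Lévy–Prokhorov distance), converges to 0 in probability as n → ∞; (2) for every bounded continuous function f : S → ℝ, the random variable ∫_S f dμ_n converges in probability to ∫_S f dμ as n → ∞. -/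
/-!
The sets `U` into which the random measures fall with probability tending to one form a filter:
closure under finite intersections is the union bound. Convergence in probability to `μ` therefore
says that this filter is finer than `𝓝 μ`, and it can be tested on any family of filters whose
infimum is `𝓝 μ`. On a separable space the Lévy–Prokhorov metric induces the weak topology, so
`𝓝 μ` is generated by Lévy–Prokhorov balls; and since weak convergence is tested by integrals of
bounded continuous functions, `𝓝 μ` is also the infimum over `f` of the pullbacks of the
neighbourhoods of `∫ f dμ` under `ν ↦ ∫ f dν`.
-/

open MeasureTheory Filter Topology BoundedContinuousFunction

namespace MeasureTheory

section InProbability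

variable {Ω ι X : Type*} [MeasurableSpace Ω]

/-- `g` converges in probability to `x` along `l` iff `inProbabilityFilter P l g ≤ 𝓝 x`. -/
def inProbabilityFilter (P : Measure Ω) (l : Filter ι) (g : ι → Ω → X) : Filter X where
  sets := {U | Tendsto (fun i ↦ P {ω | g i ω ∉ U}) l (𝓝 0)}
  univ_sets := by simp [tendsto_const_nhds]
  sets_of_superset {U V} hU hUV :=
    tendsto_of_tendsto_of_tendsto_of_le_of_le tendsto_const_nhds hU (fun _ ↦ zero_le)
      fun _ ↦ measure_mono fun _ hω hV ↦ hω (hUV hV)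
  inter_sets {U V} hU hV := by
    have hsum : Tendsto (fun i ↦ P {ω | g i ω ∉ U} + P {ω | g i ω ∉ V}) l (𝓝 0) := by
      simpa using hU.add hV
    refine tendsto_of_tendsto_of_tendsto_of_le_of_le tendsto_const_nhds hsum (fun _ ↦ zero_le)
      fun i ↦ (measure_mono fun ω hω ↦ ?_).trans (measure_union_le _ _)
    exact not_and_or.mp hω

variable {P : Measure Ω} {l : Filter ι} {g : ι → Ω → X}

@[simp]
theorem mem_inProbabilityFilter {U : Set X} :
    U ∈ inProbabilityFilter P l g ↔ Tendsto (fun i ↦ P {ω | g i ω ∉ U}) l (𝓝 0) :=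
  Iff.rfl

theorem inProbabilityFilter_le_comap_nhds_iff {Y : Type*} [PseudoMetricSpace Y] (φ : X → Y)
    (y : Y) : inProbabilityFilter P l g ≤ comap φ (𝓝 y) ↔
      ∀ ε > 0, Tendsto (fun i ↦ P {ω | ε < dist (φ (g i ω)) y}) l (𝓝 0) := by
  simp [(Metric.nhds_basis_closedBall.comap φ).ge_iff]

end InProbability

namespace ProbabilityMeasure

variable {Ω ι : Type*} [MeasurableSpace Ω] {P : Measure Ω} {l : Filter ι}

section WeakTopology

variable {S : Type*} [TopologicalSpace S] [MeasurableSpace S] [OpensMeasurableSpace S]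

theorem nhds_eq_iInf_comap_integral (μ : ProbabilityMeasure S) :
    𝓝 μ = ⨅ f : S →ᵇ ℝ,
      comap (fun ν : ProbabilityMeasure S ↦ ∫ x, f x ∂ν) (𝓝 (∫ x, f x ∂μ)) := by
  refine le_antisymm (le_iInf fun f ↦ ?_) ?_
  · exact (continuous_integral_boundedContinuousFunction f).tendsto μ |>.le_comap
  · rw [← tendsto_id']
    exact tendsto_iff_forall_integral_tendsto.mpr fun f ↦ tendsto_comap.mono_left (iInf_le _ f)

theorem inProbabilityFilter_le_nhds_iff_integral {g : ι → Ω → ProbabilityMeasure S}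
    (μ : ProbabilityMeasure S) :
    inProbabilityFilter P l g ≤ 𝓝 μ ↔ ∀ f : S →ᵇ ℝ, ∀ ε > 0,
      Tendsto (fun i ↦ P {ω | ε < |(∫ x, f x ∂(g i ω : Measure S)) - ∫ x, f x ∂(μ : Measure S)|})
        l (𝓝 0) := by
  simp_rw [nhds_eq_iInf_comap_integral, le_iInf_iff, inProbabilityFilter_le_comap_nhds_iff,
    Real.dist_eq]

end WeakTopology

theorem inProbabilityFilter_le_nhds_iff_levyProkhorovDist {S : Type*} [PseudoMetricSpace S]
    [TopologicalSpace.SeparableSpace S] [MeasurableSpace S] [OpensMeasurableSpace S]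
    {g : ι → Ω → ProbabilityMeasure S} (μ : ProbabilityMeasure S) :
    inProbabilityFilter P l g ≤ 𝓝 μ ↔ ∀ ε > 0,
      Tendsto (fun i ↦ P {ω | ε < levyProkhorovDist (g i ω : Measure S) (μ : Measure S)})
        l (𝓝 0) := by
  let e := LevyProkhorov.probabilityMeasureHomeomorph (Ω := S)
  rw [e.isInducing.nhds_eq_comap μ]
  exact inProbabilityFilter_le_comap_nhds_iff e (e μ)

end ProbabilityMeasure

end MeasureTheory

theorem fv_convergence_in_W_in_prob_iff_weakly_in_prob_general
    {S : Type*} [MetricSpace S] [TopologicalSpace.SeparableSpace S]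
    [MeasurableSpace S] [BorelSpace S]
    {Ω : Type*} [MeasurableSpace Ω] (P : Measure Ω)
    (μn : ℕ → Ω → ProbabilityMeasure S) (μ : ProbabilityMeasure S) :
    (∀ ε : ℝ, 0 < ε →
      Tendsto (fun n => P {ω | ε < levyProkhorovDist (μn n ω : Measure S) (μ : Measure S)})
        atTop (𝓝 0)) ↔
    (∀ f : S →ᵇ ℝ, ∀ ε : ℝ, 0 < ε →
      Tendsto
        (fun n => P {ω | ε < |(∫ x, f x ∂(μn n ω : Measure S)) - ∫ x, f x ∂(μ : Measure S)|})
        atTop (𝓝 0)) :=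
  (ProbabilityMeasure.inProbabilityFilter_le_nhds_iff_levyProkhorovDist μ).symm.trans
    (ProbabilityMeasure.inProbabilityFilter_le_nhds_iff_integral μ)

/-- For a sequence of random Borel probability measures `μn` on a separable
metric space `S` and a deterministic probability measure `μ`, convergence to `0` in probability
of the Lévy–Prokhorov distance from `μn n` to `μ` is equivalent to convergence in probability of
`∫ f dμn` to `∫ f dμ` for every bounded continuous `f : S → ℝ`. -/
theorem fv_convergence_in_W_in_prob_iff_weakly_in_prob
    {S : Type*} [MetricSpace S] [TopologicalSpace.SeparableSpace S]
    [MeasurableSpace S] [BorelSpace S]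
    {Ω : Type*} [MeasurableSpace Ω] (P : Measure Ω) [IsProbabilityMeasure P]
    (μn : ℕ → Ω → ProbabilityMeasure S) (μ : ProbabilityMeasure S)
    (hmeas : ∀ n, @Measurable Ω (ProbabilityMeasure S) _ (borel (ProbabilityMeasure S)) (μn n)) :
    (∀ ε : ℝ, 0 < ε →
      Tendsto (fun n => P {ω | ε < levyProkhorovDist (μn n ω : Measure S) (μ : Measure S)})
        atTop (𝓝 0)) ↔
    (∀ f : S →ᵇ ℝ, ∀ ε : ℝ, 0 < ε →
      Tendsto
        (fun n => P {ω | ε < |(∫ x, f x ∂(μn n ω : Measure S)) - ∫ x, f x ∂(μ : Measure S)|})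
        atTop (𝓝 0)) :=
  fv_convergence_in_W_in_prob_iff_weakly_in_prob_general P μn μ
end

section
/- Let (S,d) be a separable metric space, let (μ_n)_{n≥1} be a sequence of random Borel probability measures on S, and let μ be a deterministic Borel probability measure on S. Assume that for every bounded continuous function f : S → ℝ, the random variable ∫_S f dμ_n converges in probability to ∫_S f dμ. Then for every Borel set A ⊆ S with μ(∂A) = 0 (where ∂A denotes the topological boundary of A), the random variable μ_n(A) converges in probability to μ(A) as n → ∞. -/
open MeasureTheory Filter Topology BoundedContinuousFunction

/-!
Approximate the indicator of `closure A` from above by a thickened indicator `f` and that of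
`closure Aᶜ` by `g`, choosing the thickening so thin that `∫ f dμ` and `∫ g dμ` exceed
`μ (closure A) = μ A` and `μ (closure Aᶜ) = μ Aᶜ` by at most `ε / 2`; this is where
`μ (frontier A) = 0` enters. Then `ν A - μ A ≤ ∫ f dν - ∫ f dμ + ε / 2` and
`μ A - ν A ≤ ∫ g dν - ∫ g dμ + ε / 2` for every probability measure `ν`, so the event
`|μₙ A - μ A| > ε` lies in the union of two events whose probabilities tend to zero by hypothesis.
-/

lemma MeasureTheory.measureReal_le_integral_of_indicator_le {α : Type*} [MeasurableSpace α]
    {ν : Measure α} [IsFiniteMeasure ν] {s : Set α} (hs : MeasurableSet s) {f : α → ℝ}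
    (hf : Integrable f ν) (hsf : s.indicator 1 ≤ f) : ν.real s ≤ ∫ x, f x ∂ν := by
  rw [← integral_indicator_one hs]
  exact integral_mono ((integrable_const 1).indicator hs) hf hsf

section ThickenedIndicator

variable {S : Type*} [PseudoEMetricSpace S] [MeasurableSpace S] [OpensMeasurableSpace S]

lemma exists_boundedContinuous_indicator_le_integral_lt (μ : Measure S) [IsFiniteMeasure μ]
    {F : Set S} (hF : IsClosed F) {η : ℝ} (hη : 0 < η) :
    ∃ f : S →ᵇ ℝ, F.indicator 1 ≤ ⇑f ∧ ∫ x, f x ∂μ < μ.real F + η := by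
  have hδ : ∀ n : ℕ, (0 : ℝ) < 1 / (n + 1) := fun n ↦ by positivity
  obtain ⟨M, hM⟩ := eventually_atTop.1 <|
    (tendsto_integral_thickenedIndicator_of_isClosed μ hF hδ
      tendsto_one_div_add_atTop_nhds_zero_nat).eventually_lt_const (lt_add_of_pos_right _ hη)
  refine ⟨(thickenedIndicator (hδ M) F).comp NNReal.toReal isometry_subtype_coe.lipschitz,
    fun x ↦ ?_, hM M le_rfl⟩
  change F.indicator 1 x ≤ (thickenedIndicator (hδ M) F x : ℝ)
  by_cases hx : x ∈ F
  · rw [thickenedIndicator_one (hδ M) F hx]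
    simp [hx]
  · simp [hx]

lemma exists_boundedContinuous_measureReal_sub_le (μ : Measure S) [IsFiniteMeasure μ]
    (B : Set S) {η : ℝ} (hη : 0 < η) :
    ∃ f : S →ᵇ ℝ, ∀ (ν : Measure S) [IsFiniteMeasure ν],
      ν.real B - μ.real (closure B) ≤ (∫ x, f x ∂ν) - (∫ x, f x ∂μ) + η := by
  obtain ⟨f, hfB, hfμ⟩ := exists_boundedContinuous_indicator_le_integral_lt μ isClosed_closure hη
  refine ⟨f, fun ν _ ↦ ?_⟩
  have hνB : ν.real B ≤ ν.real (closure B) := measureReal_mono subset_closure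
  have hνf : ν.real (closure B) ≤ ∫ x, f x ∂ν :=
    measureReal_le_integral_of_indicator_le isClosed_closure.measurableSet (f.integrable ν) hfB
  linarith

lemma exists_boundedContinuous_abs_measureReal_sub_le (μ : Measure S) [IsProbabilityMeasure μ]
    {A : Set S} (hA : MeasurableSet A) (hA₀ : μ (frontier A) = 0) {η : ℝ} (hη : 0 < η) :
    ∃ f g : S →ᵇ ℝ, ∀ (ν : Measure S) [IsProbabilityMeasure ν],
      |ν.real A - μ.real A| ≤
        max |(∫ x, f x ∂ν) - ∫ x, f x ∂μ| |(∫ x, g x ∂ν) - ∫ x, g x ∂μ| + η := by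
  obtain ⟨f, hf⟩ := exists_boundedContinuous_measureReal_sub_le μ A hη
  obtain ⟨g, hg⟩ := exists_boundedContinuous_measureReal_sub_le μ Aᶜ hη
  have hcl : μ.real (closure A) = μ.real A := by
    simp only [measureReal_def, measure_closure_of_null_frontier hA₀]
  have hclc : μ.real (closure Aᶜ) = μ.real Aᶜ := by
    simp only [measureReal_def, measure_closure_of_null_frontier (frontier_compl A ▸ hA₀)]
  refine ⟨f, g, fun ν _ ↦ ?_⟩
  have hupper : ν.real A - μ.real A ≤ (∫ x, f x ∂ν) - (∫ x, f x ∂μ) + η := hcl ▸ hf ν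
  have hlower : μ.real A - ν.real A ≤ (∫ x, g x ∂ν) - (∫ x, g x ∂μ) + η := by
    have := hg ν
    rw [hclc, measureReal_compl hA, measureReal_compl hA, probReal_univ, probReal_univ] at this
    linarith
  refine abs_sub_le_iff.2 ⟨hupper.trans ?_, hlower.trans ?_⟩
  · gcongr
    exact (le_abs_self _).trans (le_max_left _ _)
  · gcongr
    exact (le_abs_self _).trans (le_max_right _ _)

end ThickenedIndicator

lemma MeasureTheory.tendsto_measure_zero_of_subset_union {Ω ι : Type*} [MeasurableSpace Ω]
    (P : Measure Ω) {l : Filter ι} {s t u : ι → Set Ω} (hsub : ∀ i, s i ⊆ t i ∪ u i)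
    (ht : Tendsto (fun i ↦ P (t i)) l (𝓝 0)) (hu : Tendsto (fun i ↦ P (u i)) l (𝓝 0)) :
    Tendsto (fun i ↦ P (s i)) l (𝓝 0) :=
  tendsto_of_tendsto_of_tendsto_of_le_of_le tendsto_const_nhds (by simpa using ht.add hu)
    (fun _ ↦ zero_le) fun i ↦ (measure_mono (hsub i)).trans (measure_union_le _ _)

theorem fv_convergence_on_continuity_sets_general
    {S : Type*} [MetricSpace S]
    [MeasurableSpace S] [BorelSpace S]
    {Ω : Type*} [MeasurableSpace Ω] (P : Measure Ω)
    (μn : ℕ → Ω → ProbabilityMeasure S) (μ : ProbabilityMeasure S)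
    (hconv : ∀ f : S →ᵇ ℝ, ∀ ε : ℝ, 0 < ε →
      Tendsto
        (fun n => P {ω | ε < |(∫ x, f x ∂(μn n ω : Measure S)) - ∫ x, f x ∂(μ : Measure S)|})
        atTop (𝓝 0)) :
    ∀ A : Set S, MeasurableSet A → (μ : Measure S) (frontier A) = 0 →
      ∀ ε : ℝ, 0 < ε →
        Tendsto (fun n => P {ω | ε < |((μn n ω) A : ℝ) - ((μ A : ℝ))|}) atTop (𝓝 0) := by
  intro A hA hA₀ ε hε
  obtain ⟨f, g, hfg⟩ :=
    exists_boundedContinuous_abs_measureReal_sub_le (μ : Measure S) hA hA₀ (half_pos hε)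
  refine tendsto_measure_zero_of_subset_union P (fun n ω hω ↦ ?_)
    (hconv f _ (half_pos hε)) (hconv g _ (half_pos hε))
  have hdev := hfg (μn n ω)
  simp only [Set.mem_ofPred_eq, ← ProbabilityMeasure.measureReal_eq_coe_coeFn] at hω
  rw [Set.mem_union, Set.mem_ofPred_eq, Set.mem_ofPred_eq, ← lt_max_iff]
  linarith

/-- If the random probability measures `μn n` converge to the deterministic
probability measure `μ` in the sense that `∫ f dμn n → ∫ f dμ` in probability for every bounded
continuous `f`, then for every Borel set `A` with `μ (frontier A) = 0`, the random variable
`μn n A` converges in probability to `μ A`. -/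
theorem fv_convergence_on_continuity_sets
    {S : Type*} [MetricSpace S] [TopologicalSpace.SeparableSpace S]
    [MeasurableSpace S] [BorelSpace S]
    {Ω : Type*} [MeasurableSpace Ω] (P : Measure Ω) [IsProbabilityMeasure P]
    (μn : ℕ → Ω → ProbabilityMeasure S) (μ : ProbabilityMeasure S)
    (hmeas : ∀ n, @Measurable Ω (ProbabilityMeasure S) _ (borel (ProbabilityMeasure S)) (μn n))
    (hconv : ∀ f : S →ᵇ ℝ, ∀ ε : ℝ, 0 < ε →
      Tendsto
        (fun n => P {ω | ε < |(∫ x, f x ∂(μn n ω : Measure S)) - ∫ x, f x ∂(μ : Measure S)|})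
        atTop (𝓝 0)) :
    ∀ A : Set S, MeasurableSet A → (μ : Measure S) (frontier A) = 0 →
      ∀ ε : ℝ, 0 < ε →
        Tendsto (fun n => P {ω | ε < |((μn n ω) A : ℝ) - ((μ A : ℝ))|}) atTop (𝓝 0) :=
  fv_convergence_on_continuity_sets_general P μn μ hconv
end

section
/- Let {γ^N_k : 1 ≤ k ≤ N, N ∈ ℕ} be a triangular array of real random variables on a probability space (Ω,𝔉,ℙ) which is uniformly integrable. Assume that for each N the random vector (γ^N_1, …, γ^N_N) is exchangeable, i.e. for every permutation σ of {1,…,N} the vector (γ^N_{σ(1)}, …, γ^N_{σ(N)}) has the same joint law as (γ^N_1, …, γ^N_N). Assume moreover that the pair (γ^N_1, γ^N_2) converges in distribution as N → ∞ to a pair (γ_1, γ_2) of independent, integrable random variables. Then (1/N)·Σ_{k=1}^N γ^N_k converges in probability to 𝔼[γ_1] as N → ∞. -/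
/-!
Truncate at a level `M` given by uniform integrability, so that the truncation error is small in
`L¹` uniformly in `N` and Markov's inequality controls it. The truncated variables are bounded and
exchangeable, so the variance of their average is at most `M² / N + |cov|`, where `cov` is the
covariance of the truncations of `γ^N_1` and `γ^N_2`. Truncation is bounded and continuous, so
weak convergence sends this covariance to that of the truncations of `γ₁` and `γ₂`, which is zero
by independence; Chebyshev's inequality then handles the truncated average. Weak convergence also
sends the truncated mean to `𝔼[clip M γ₁]`, which is close to `𝔼[γ₁]` for large `M`.
-/

open MeasureTheory Filter Topology BoundedContinuousFunction ProbabilityTheory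

lemma ENNReal.tendsto_nhds_zero_of_eventually_le_ofReal {α : Type*} {l : Filter α}
    {f : α → ENNReal} (h : ∀ r : ℝ, 0 < r → ∀ᶠ a in l, f a ≤ ENNReal.ofReal r) :
    Tendsto f l (𝓝 0) := by
  refine ENNReal.tendsto_nhds_zero.2 fun η hη => ?_
  obtain ⟨r, -, hr, hrη⟩ := ENNReal.lt_iff_exists_real_btwn.1 hη
  filter_upwards [h r (ENNReal.ofReal_pos.1 hr)] with a ha using ha.trans hrη.le

def clip (M x : ℝ) : ℝ := max (-M) (min M x)

lemma continuous_clip (M : ℝ) : Continuous (clip M) := by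
  unfold clip; fun_prop

lemma abs_clip_le (M x : ℝ) : |clip M x| ≤ |M| :=
  abs_le.2 ⟨(neg_le_neg (le_abs_self M)).trans (le_max_left _ _),
    max_le (neg_le_abs M) ((min_le_left _ _).trans (le_abs_self M))⟩

lemma clip_eq_self {M x : ℝ} (hx : |x| ≤ M) : clip M x = x := by
  rw [abs_le] at hx
  simp [clip, hx.1, hx.2]

lemma abs_sub_clip_le {M : ℝ} (hM : 0 ≤ M) (x : ℝ) : |x - clip M x| ≤ |x| := by
  unfold clip
  rcases le_total x 0 with hx | hx
  · rw [abs_of_nonpos hx, min_eq_right (hx.trans hM), abs_le]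
    constructor <;> (cases max_choice (-M) x <;> simp_all <;> linarith)
  · rw [abs_of_nonneg hx, max_eq_right (by linarith [min_le_left M x, le_min hM hx]), abs_le]
    constructor <;> (cases min_choice M x <;> simp_all <;> linarith)

noncomputable def clipBCF (M : ℝ) : ℝ →ᵇ ℝ :=
  .mkOfBound ⟨clip M, continuous_clip M⟩ (2 * |M|) fun x y => by
    change |clip M x - clip M y| ≤ 2 * |M|
    exact (abs_sub _ _).trans (by linarith [abs_clip_le M x, abs_clip_le M y])

@[simp] lemma clipBCF_apply (M x : ℝ) : clipBCF M x = clip M x := rfl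

lemma BoundedContinuousFunction.memLp_comp {α : Type*} [MeasurableSpace α] {μ : Measure α}
    [IsFiniteMeasure μ] (f : ℝ →ᵇ ℝ) {W : α → ℝ} (hW : AEMeasurable W μ) {p : ENNReal} :
    MemLp (fun a => f (W a)) p μ :=
  (f.memLp_top.mono_exponent le_top).comp_of_map hW

lemma memLp_clip_comp {α : Type*} [MeasurableSpace α] {μ : Measure α} [IsFiniteMeasure μ]
    (M : ℝ) {W : α → ℝ} (hW : AEMeasurable W μ) {p : ENNReal} :
    MemLp (fun a => clip M (W a)) p μ :=
  (clipBCF M).memLp_comp hW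

section

variable {Ω : Type*} [MeasurableSpace Ω] {P : Measure Ω}

lemma integral_abs_sub_clip_le_setIntegral {X : Ω → ℝ} (hXm : Measurable X) (hX : Integrable X P)
    {M M' : ℝ} (hM : 0 ≤ M) (hM' : M' ≤ M) :
    ∫ ω, |X ω - clip M (X ω)| ∂P ≤ ∫ ω in {ω | M' < |X ω|}, |X ω| ∂P := by
  have hs : MeasurableSet {ω | M' < |X ω|} := measurableSet_lt measurable_const hXm.abs
  rw [← integral_indicator hs]
  refine integral_mono_of_nonneg (ae_of_all _ fun ω => abs_nonneg _)
    (hX.abs.indicator hs) (ae_of_all _ fun ω => ?_)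
  by_cases hω : M' < |X ω|
  · simpa [Set.indicator_of_mem (show ω ∈ {ω | M' < |X ω|} from hω)] using abs_sub_clip_le hM _
  · rw [Set.indicator_of_notMem (show ω ∉ {ω | M' < |X ω|} from hω)]
    simp [clip_eq_self ((not_lt.1 hω).trans hM')]

lemma tendsto_integral_abs_sub_clip {X : Ω → ℝ} (hX : Integrable X P) :
    Tendsto (fun M => ∫ ω, |X ω - clip M (X ω)| ∂P) atTop (𝓝 0) := by
  have h := tendsto_integral_filter_of_dominated_convergence (μ := P) (l := atTop)
    (F := fun M ω => |X ω - clip M (X ω)|) (f := fun _ => 0) (fun ω => |X ω|)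
    (Eventually.of_forall fun M => ((hX.aestronglyMeasurable.sub
      ((continuous_clip M).comp_aestronglyMeasurable hX.aestronglyMeasurable)).norm))
    ((eventually_ge_atTop 0).mono fun M hM => ae_of_all _ fun ω => by
      simpa using abs_sub_clip_le hM (X ω))
    hX.abs
    (ae_of_all _ fun ω => tendsto_const_nhds.congr' <|
      (eventually_ge_atTop |X ω|).mono fun M hM => by simp [clip_eq_self hM])
  simpa using h

lemma abs_integral_clip_sub_integral_le [IsFiniteMeasure P] {X : Ω → ℝ} (hX : Integrable X P)
    (M : ℝ) : |∫ ω, clip M (X ω) ∂P - ∫ ω, X ω ∂P| ≤ ∫ ω, |X ω - clip M (X ω)| ∂P := by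
  rw [← integral_sub ((memLp_clip_comp M hX.aemeasurable).integrable le_rfl) hX]
  exact abs_integral_le_integral_abs.trans_eq
    (integral_congr_ae (ae_of_all _ fun ω => abs_sub_comm _ _))

lemma measure_lt_abs_add_add_le {U V : Ω → ℝ} {c ε : ℝ} (hc : |c| ≤ ε / 3) :
    P {ω | ε < |U ω + V ω + c|} ≤ P {ω | ε / 3 ≤ |U ω|} + P {ω | ε / 3 ≤ |V ω|} := by
  refine (measure_mono fun ω hω => ?_).trans (measure_union_le _ _)
  by_contra h
  simp only [Set.mem_union, Set.mem_ofPred_eq, not_or, not_le] at h hω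
  linarith [abs_add_le (U ω + V ω) c, abs_add_le (U ω) (V ω)]

lemma measure_le_abs_le_ofReal_integral_div [IsFiniteMeasure P] {V : Ω → ℝ}
    (hV : Integrable V P) {c : ℝ} (hc : 0 < c) :
    P {ω | c ≤ |V ω|} ≤ ENNReal.ofReal ((∫ ω, |V ω| ∂P) / c) := by
  rw [← ofReal_measureReal]
  refine ENNReal.ofReal_le_ofReal ((le_div_iff₀ hc).2 ?_)
  rw [mul_comm]
  exact mul_meas_ge_le_integral_of_nonneg (ae_of_all _ fun ω => abs_nonneg _) hV.abs c

lemma integral_abs_average_le {ι : Type*} [Fintype ι] [Nonempty ι] {Z : ι → Ω → ℝ}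
    (hZ : ∀ k, Integrable (Z k) P) {δ : ℝ} (hδ : ∀ k, ∫ ω, |Z k ω| ∂P ≤ δ) :
    ∫ ω, |(∑ k, Z k ω) / Fintype.card ι| ∂P ≤ δ := by
  have hn : (0 : ℝ) < Fintype.card ι := by exact_mod_cast Fintype.card_pos
  calc ∫ ω, |(∑ k, Z k ω) / Fintype.card ι| ∂P
      ≤ ∫ ω, (∑ k, |Z k ω|) / Fintype.card ι ∂P := by
        refine integral_mono ((integrable_finsetSum _ fun k _ => hZ k).div_const _).abs
          ((integrable_finsetSum _ fun k _ => (hZ k).abs).div_const _) fun ω => ?_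
        rw [abs_div, abs_of_pos hn]
        gcongr
        exact Finset.abs_sum_le_sum_abs _ _
    _ ≤ (∑ _k : ι, δ) / Fintype.card ι := by
        rw [integral_div, integral_finsetSum _ fun k _ => (hZ k).abs]
        gcongr with k
        exact hδ k
    _ = δ := by simp [hn.ne']

lemma tendsto_covariance_comp_of_indepFun {ι Ω' : Type*} [MeasurableSpace Ω']
    {P' : Measure Ω'} [IsProbabilityMeasure P] [IsProbabilityMeasure P'] {l : Filter ι}
    {U V : ι → Ω → ℝ} {Z₁ Z₂ : Ω' → ℝ}
    (hUV : ∀ᶠ i in l, AEMeasurable (U i) P ∧ AEMeasurable (V i) P)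
    (hZ₁ : AEMeasurable Z₁ P') (hZ₂ : AEMeasurable Z₂ P') (hZ : IndepFun Z₁ Z₂ P')
    (h : ∀ g : (ℝ × ℝ) →ᵇ ℝ,
      Tendsto (fun i => ∫ ω, g (U i ω, V i ω) ∂P) l (𝓝 (∫ ω', g (Z₁ ω', Z₂ ω') ∂P')))
    (f g : ℝ →ᵇ ℝ) :
    Tendsto (fun i => cov[fun ω => f (U i ω), fun ω => g (V i ω); P]) l (𝓝 0) := by
  have hlim : cov[fun ω => f (Z₁ ω), fun ω => g (Z₂ ω); P'] = 0 :=
    (hZ.comp f.measurable g.measurable).covariance_eq_zero (f.memLp_comp hZ₁) (g.memLp_comp hZ₂)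
  rw [← hlim, covariance_eq_sub (f.memLp_comp hZ₁) (g.memLp_comp hZ₂)]
  refine Tendsto.congr' (hUV.mono fun i hi =>
    (covariance_eq_sub (f.memLp_comp hi.1) (g.memLp_comp hi.2)).symm) ?_
  have hfg := h (f.compContinuous ContinuousMap.fst * g.compContinuous ContinuousMap.snd)
  have hf := h (f.compContinuous ContinuousMap.fst)
  have hg := h (g.compContinuous ContinuousMap.snd)
  simp only [coe_mul, Pi.mul_apply, compContinuous_apply, ContinuousMap.fst_apply,
    ContinuousMap.snd_apply] at hfg hf hg
  exact hfg.sub (hf.mul hg)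

end

namespace ProbabilityTheory

variable {Ω ι β : Type*} [MeasurableSpace Ω] [MeasurableSpace β]

def Exchangeable (X : ι → Ω → β) (P : Measure Ω) : Prop :=
  ∀ σ : Equiv.Perm ι, P.map (fun ω k => X (σ k) ω) = P.map (fun ω k => X k ω)

lemma IdentDistrib.covariance_eq {Ω' : Type*} [MeasurableSpace Ω']
    {X Y : Ω → ℝ} {X' Y' : Ω' → ℝ} {μ : Measure Ω} {ν : Measure Ω'}
    (h : IdentDistrib (fun ω => (X ω, Y ω)) (fun ω => (X' ω, Y' ω)) μ ν) :
    cov[X, Y; μ] = cov[X', Y'; ν] := by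
  have hX : ∫ ω, X ω ∂μ = ∫ ω, X' ω ∂ν := (h.comp measurable_fst).integral_eq
  have hY : ∫ ω, Y ω ∂μ = ∫ ω, Y' ω ∂ν := (h.comp measurable_snd).integral_eq
  simp only [covariance, hX, hY]
  exact (h.comp (u := fun p : ℝ × ℝ => (p.1 - ∫ ω, X' ω ∂ν) * (p.2 - ∫ ω, Y' ω ∂ν))
    (by fun_prop)).integral_eq

namespace Exchangeable

variable {X : ι → Ω → β} {P : Measure Ω}

lemma map_comp_perm {γ : Type*} [MeasurableSpace γ] (hX : Exchangeable X P)
    (hXm : ∀ k, Measurable (X k)) (σ : Equiv.Perm ι) {F : (ι → β) → γ} (hF : Measurable F) :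
    P.map (fun ω => F fun k => X (σ k) ω) = P.map (fun ω => F fun k => X k ω) := by
  have h := congrArg (Measure.map F) (hX σ)
  rwa [Measure.map_map hF (measurable_pi_lambda _ fun k => hXm _),
    Measure.map_map hF (measurable_pi_lambda _ hXm)] at h

lemma comp {γ : Type*} [MeasurableSpace γ] (hX : Exchangeable X P) (hXm : ∀ k, Measurable (X k))
    {f : β → γ} (hf : Measurable f) : Exchangeable (fun k ω => f (X k ω)) P := fun σ =>
  hX.map_comp_perm hXm σ (F := fun v k => f (v k)) (measurable_pi_lambda _ fun k =>
    hf.comp (measurable_pi_apply k))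

lemma identDistrib (hX : Exchangeable X P) (hXm : ∀ k, Measurable (X k)) (i j : ι) :
    IdentDistrib (X i) (X j) P P where
  aemeasurable_fst := (hXm i).aemeasurable
  aemeasurable_snd := (hXm j).aemeasurable
  map_eq := by
    classical
    simpa using hX.map_comp_perm hXm (Equiv.swap i j) (measurable_pi_apply j)

lemma identDistrib_pair (hX : Exchangeable X P) (hXm : ∀ k, Measurable (X k))
    {i j i' j' : ι} (hij : i ≠ j) (hij' : i' ≠ j') :
    IdentDistrib (fun ω => (X i ω, X j ω)) (fun ω => (X i' ω, X j' ω)) P P where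
  aemeasurable_fst := ((hXm i).prodMk (hXm j)).aemeasurable
  aemeasurable_snd := ((hXm i').prodMk (hXm j')).aemeasurable
  map_eq := by
    obtain ⟨σ, hσ⟩ := Equiv.Perm.exists_extending_pair ![i', j'] ![i, j]
      (injective_pair_iff_ne.2 hij') (injective_pair_iff_ne.2 hij)
    have hσi : σ i' = i := by simpa using hσ 0
    have hσj : σ j' = j := by simpa using hσ 1
    simpa [hσi, hσj] using hX.map_comp_perm hXm σ
      ((measurable_pi_apply i').prodMk (measurable_pi_apply j'))

lemma variance_sum [Fintype ι] [IsFiniteMeasure P] {X : ι → Ω → ℝ}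
    (hX : Exchangeable X P) (hXm : ∀ k, Measurable (X k)) (hX2 : ∀ k, MemLp (X k) 2 P)
    {i j : ι} (hij : i ≠ j) :
    Var[fun ω => ∑ k, X k ω; P] =
      Fintype.card ι * Var[X i; P] + Fintype.card ι * (Fintype.card ι - 1) * cov[X i, X j; P] := by
  classical
  have hcov : ∀ k l, cov[X k, X l; P] = if k = l then Var[X i; P] else cov[X i, X j; P] := by
    intro k l
    split_ifs with hkl
    · rw [hkl, covariance_self (hXm l).aemeasurable, (hX.identDistrib hXm l i).variance_eq]
    · exact (hX.identDistrib_pair hXm hkl hij).covariance_eq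
  rw [variance_fun_sum hX2]
  have hrow : ∀ k, ∑ l, cov[X k, X l; P] =
      Var[X i; P] + (Fintype.card ι - 1) * cov[X i, X j; P] := by
    intro k
    rw [← Finset.add_sum_erase _ _ (Finset.mem_univ k), hcov, if_pos rfl,
      Finset.sum_congr rfl fun l hl => (hcov k l).trans (if_neg (Finset.ne_of_mem_erase hl).symm)]
    have : Nonempty ι := ⟨i⟩
    simp [Finset.card_erase_of_mem, Nat.cast_sub Fintype.card_pos]
  simp only [hrow, Finset.sum_const, Finset.card_univ, nsmul_eq_mul]
  ring

lemma integral_average [Fintype ι] {X : ι → Ω → ℝ} (hX : Exchangeable X P)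
    (hXm : ∀ k, Measurable (X k)) (hXi : ∀ k, Integrable (X k) P) (i : ι) :
    ∫ ω, (∑ k, X k ω) / Fintype.card ι ∂P = ∫ ω, X i ω ∂P := by
  have : Nonempty ι := ⟨i⟩
  rw [integral_div, integral_finsetSum _ fun k _ => hXi k,
    Finset.sum_congr rfl fun k _ => (hX.identDistrib hXm k i).integral_eq]
  simp

lemma variance_average_le [Fintype ι] [IsProbabilityMeasure P]
    {X : ι → Ω → ℝ} (hX : Exchangeable X P) (hXm : ∀ k, Measurable (X k)) {K : ℝ}
    (hK : ∀ k ω, |X k ω| ≤ K) {i j : ι} (hij : i ≠ j) :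
    Var[fun ω => (∑ k, X k ω) / Fintype.card ι; P] ≤
      K ^ 2 / Fintype.card ι + |cov[X i, X j; P]| := by
  have hbdd : ∀ k, ∀ᵐ ω ∂P, X k ω ∈ Set.Icc (-K) K := fun k =>
    ae_of_all _ fun ω => abs_le.1 (hK k ω)
  have hX2 : ∀ k, MemLp (X k) 2 P := fun k =>
    memLp_of_bounded (hbdd k) (hXm k).aestronglyMeasurable 2
  have hVar : Var[X i; P] ≤ K ^ 2 := by
    simpa using variance_le_sq_of_bounded (hbdd i) (hXm i).aemeasurable
  have hn : (1 : ℝ) ≤ Fintype.card ι := by exact_mod_cast (Fintype.card_pos_iff.2 ⟨i⟩)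
  simp_rw [div_eq_mul_inv _ (Fintype.card ι : ℝ)]
  rw [variance_mul_const, hX.variance_sum hXm hX2 hij]
  set n : ℝ := (Fintype.card ι : ℝ)
  have hfrac : 0 ≤ (n - 1) / n ∧ (n - 1) / n ≤ 1 :=
    ⟨div_nonneg (by linarith) (by linarith), div_le_one_of_le₀ (by linarith) (by linarith)⟩
  calc (n * Var[X i; P] + n * (n - 1) * cov[X i, X j; P]) * n⁻¹ ^ 2
      = Var[X i; P] / n + (n - 1) / n * cov[X i, X j; P] := by field_simp
    _ ≤ K ^ 2 / n + 1 * |cov[X i, X j; P]| :=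
      add_le_add (by gcongr) ((mul_le_mul_of_nonneg_left (le_abs_self _) hfrac.1).trans
        (mul_le_mul_of_nonneg_right hfrac.2 (abs_nonneg _)))
    _ = K ^ 2 / n + |cov[X i, X j; P]| := by rw [one_mul]

lemma measure_lt_abs_average_sub_le [Fintype ι] [IsProbabilityMeasure P]
    {X : ι → Ω → ℝ} (hX : Exchangeable X P) (hXm : ∀ k, Measurable (X k))
    (hXi : ∀ k, Integrable (X k) P) {i j : ι} (hij : i ≠ j) {M δ ε m : ℝ} (hM : 0 ≤ M)
    (hε : 0 < ε) (htail : ∀ k, ∫ ω, |X k ω - clip M (X k ω)| ∂P ≤ δ)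
    (hmean : |∫ ω, clip M (X i ω) ∂P - m| ≤ ε / 3) :
    P {ω | ε < |(∑ k, X k ω) / Fintype.card ι - m|} ≤
      ENNReal.ofReal ((M ^ 2 / Fintype.card ι +
          |cov[fun ω => clip M (X i ω), fun ω => clip M (X j ω); P]|) / (ε / 3) ^ 2) +
        ENNReal.ofReal (δ / (ε / 3)) := by
  have : Nonempty ι := ⟨i⟩
  set Y : ι → Ω → ℝ := fun k ω => clip M (X k ω)
  have hYm : ∀ k, Measurable (Y k) := fun k => (continuous_clip M).measurable.comp (hXm k)
  have hY : Exchangeable Y P := hX.comp hXm (continuous_clip M).measurable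
  have hYbdd : ∀ k ω, |Y k ω| ≤ M := fun k ω => (abs_clip_le M _).trans (abs_of_nonneg hM).le
  have hY2 : ∀ k, MemLp (Y k) 2 P := fun k => memLp_clip_comp M (hXm k).aemeasurable
  have hYi : ∀ k, Integrable (Y k) P := fun k => (hY2 k).integrable one_le_two
  set A : Ω → ℝ := fun ω => (∑ k, Y k ω) / Fintype.card ι
  have hA : MemLp A 2 P := by
    simpa only [A, div_eq_mul_inv] using (memLp_finsetSum _ fun k _ => hY2 k).mul_const _
  have hEA : ∫ ω, A ω ∂P = ∫ ω, Y i ω ∂P := hY.integral_average hYm hYi i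
  have hdecomp : ∀ ω, (∑ k, X k ω) / Fintype.card ι - m =
      (A ω - ∫ ω, A ω ∂P) + (∑ k, (X k ω - Y k ω)) / Fintype.card ι + (∫ ω, A ω ∂P - m) := by
    intro ω
    simp only [A, Finset.sum_sub_distrib]
    ring
  simp_rw [hdecomp]
  refine (measure_lt_abs_add_add_le (by rwa [hEA])).trans (add_le_add ?_ ?_)
  · refine (meas_ge_le_variance_div_sq hA (by positivity)).trans (ENNReal.ofReal_le_ofReal ?_)
    gcongr
    exact hY.variance_average_le hYm hYbdd hij
  · refine (measure_le_abs_le_ofReal_integral_div ((integrable_finsetSum _ fun k _ =>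
      (hXi k).sub (hYi k)).div_const _) (by positivity)).trans (ENNReal.ofReal_le_ofReal ?_)
    gcongr
    exact integral_abs_average_le (fun k => (hXi k).sub (hYi k)) htail

end Exchangeable
end ProbabilityTheory

/-- **weak convergence lemma for exchangeable triangular arrays.**
Let `γ N k`, for `k < N`, be a uniformly integrable triangular array of real random variables
such that `(γ N 0, …, γ N (N-1))` is exchangeable for each `N` and `(γ N 0, γ N 1)` converges
in distribution to a pair `(γ₁, γ₂)` of independent integrable random variables. Then
`(1/N) ∑_{k<N} γ N k` converges in probability to `𝔼[γ₁]`. -/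
theorem fv_weak_convergence_lemma
    {Ω : Type*} [MeasurableSpace Ω] (P : Measure Ω) [IsProbabilityMeasure P]
    {Ω' : Type*} [MeasurableSpace Ω'] (P' : Measure Ω') [IsProbabilityMeasure P']
    (γ : ℕ → ℕ → Ω → ℝ) (γ₁ γ₂ : Ω' → ℝ)
    (hmeas : ∀ N k, k < N → Measurable (γ N k))
    (hint : ∀ N k, k < N → Integrable (γ N k) P)
    (hUI : ∀ δ : ℝ, 0 < δ → ∃ M : ℝ, ∀ N k, k < N →
      ∫ ω in {ω | M < |γ N k ω|}, |γ N k ω| ∂P ≤ δ)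
    (hexch : ∀ N : ℕ, ∀ σ : Equiv.Perm (Fin N),
      Measure.map (fun ω => fun k : Fin N => γ N (σ k : ℕ) ω) P =
        Measure.map (fun ω => fun k : Fin N => γ N (k : ℕ) ω) P)
    (hγ₁ : Integrable γ₁ P') (hγ₂ : Integrable γ₂ P')
    (hindep : ProbabilityTheory.IndepFun γ₁ γ₂ P')
    (hconv : ∀ g : (ℝ × ℝ) →ᵇ ℝ,
      Tendsto (fun N => ∫ ω, g (γ N 0 ω, γ N 1 ω) ∂P) atTop
        (𝓝 (∫ ω', g (γ₁ ω', γ₂ ω') ∂P'))) :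
    ∀ ε : ℝ, 0 < ε →
      Tendsto
        (fun N => P {ω | ε < |(∑ k ∈ Finset.range N, γ N k ω) / N - ∫ ω', γ₁ ω' ∂P'|})
        atTop (𝓝 0) := by
  intro ε hε
  set m := ∫ ω', γ₁ ω' ∂P'
  refine ENNReal.tendsto_nhds_zero_of_eventually_le_ofReal fun r hr => ?_
  -- Markov's bound for the truncation error is then `(ε / 3 * (r / 2)) / (ε / 3) = r / 2`.
  obtain ⟨M₁, hM₁⟩ := hUI (ε / 3 * (r / 2)) (by positivity)
  obtain ⟨M, hγ₁tail, hMM₁⟩ := (((tendsto_integral_abs_sub_clip hγ₁).eventually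
    (ge_mem_nhds (show (0 : ℝ) < ε / 6 by positivity))).and (eventually_ge_atTop (max M₁ 0))).exists
  have hM : 0 ≤ M := (le_max_right _ _).trans hMM₁
  have hmean : Tendsto (fun N => ∫ ω, clip M (γ N 0 ω) ∂P) atTop
      (𝓝 (∫ ω', clip M (γ₁ ω') ∂P')) := by
    simpa using hconv ((clipBCF M).compContinuous ContinuousMap.fst)
  have hvar : Tendsto (fun N : ℕ => (M ^ 2 / N +
      |cov[fun ω => clip M (γ N 0 ω), fun ω => clip M (γ N 1 ω); P]|) / (ε / 3) ^ 2)
      atTop (𝓝 0) := by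
    have hcov := tendsto_covariance_comp_of_indepFun ((eventually_gt_atTop 1).mono fun N hN =>
      ⟨(hmeas N 0 (by omega)).aemeasurable, (hmeas N 1 hN).aemeasurable⟩)
      hγ₁.aemeasurable hγ₂.aemeasurable hindep hconv (clipBCF M) (clipBCF M)
    simpa using ((tendsto_const_div_atTop_nhds_zero_nat (M ^ 2)).add hcov.abs).div_const _
  filter_upwards [eventually_gt_atTop 1, hvar.eventually (ge_mem_nhds (half_pos hr)),
    hmean.eventually (Metric.closedBall_mem_nhds _ (show (0 : ℝ) < ε / 6 by positivity))]
    with N hN hvarN hmeanN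
  have hmeanN' : |∫ ω, clip M (γ N 0 ω) ∂P - m| ≤ ε / 3 := by
    rw [Real.dist_eq] at hmeanN
    linarith [abs_sub_le (∫ ω, clip M (γ N 0 ω) ∂P) (∫ ω', clip M (γ₁ ω') ∂P') m,
      abs_integral_clip_sub_integral_le hγ₁ M]
  have htail : ∀ k : Fin N, ∫ ω, |γ N k ω - clip M (γ N k ω)| ∂P ≤ ε / 3 * (r / 2) := fun k =>
    (integral_abs_sub_clip_le_setIntegral (hmeas N k k.2) (hint N k k.2) hM
      ((le_max_left _ _).trans hMM₁)).trans (hM₁ N k k.2)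
  have hX : Exchangeable (fun k : Fin N => γ N k) P := hexch N
  calc P {ω | ε < |(∑ k ∈ Finset.range N, γ N k ω) / N - m|}
      = P {ω | ε < |(∑ k : Fin N, γ N k ω) / Fintype.card (Fin N) - m|} := by
        simp only [Finset.sum_range, Fintype.card_fin]
    _ ≤ ENNReal.ofReal (r / 2) + ENNReal.ofReal (ε / 3 * (r / 2) / (ε / 3)) := by
        refine (hX.measure_lt_abs_average_sub_le (fun k => hmeas N k k.2)
          (fun k => hint N k k.2) (i := ⟨0, by omega⟩) (j := ⟨1, hN⟩) (by simp [Fin.ext_iff])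
          hM hε htail hmeanN').trans ?_
        simpa using ENNReal.ofReal_le_ofReal hvarN
    _ = ENNReal.ofReal r := by
        rw [mul_div_cancel_left₀ _ (by positivity), ← ENNReal.ofReal_add (by positivity)
          (by positivity), add_halves]
end
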